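/- (Separable states satisfy the CHSH bound) Let B = √2·(σ₁⊗σ₁ + σ₂⊗σ₂) be the Bell operator. If ρ is a separable 4×4 state, i.e. ρ = Σ_{n=1}^{N} p_n · ρ_A^{(n)} ⊗ ρ_B^{(n)} with p_n ≥ 0, Σ_n p_n = 1, and each ρ_A^{(n)}, ρ_B^{(n)} a positive-semidefinite 2×2 complex matrix of trace 1, then |Tr(B ρ)| ≤ 2. -/

import Mathlib

open Matrix
open scoped Kronecker ComplexOrder

/-- The four Pauli matrices (paper's convention, with `σ₃` the antisymmetric one). -/
noncomputable def pauli : Fin 4 → Matrix (Fin 2) (Fin 2) ℂ :=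
  ![!![1, 0; 0, 1], !![1, 0; 0, -1], !![0, 1; 1, 0], !![0, -Complex.I; Complex.I, 0]]

/-- The Bell operator `B = √2 (σ₁⊗σ₁ + σ₂⊗σ₂)`. -/
noncomputable def bellOperator : Matrix (Fin 2 × Fin 2) (Fin 2 × Fin 2) ℂ :=
  (Real.sqrt 2 : ℂ) • (pauli 1 ⊗ₖ pauli 1 + pauli 2 ⊗ₖ pauli 2)

/-- A two-qubit state is separable if it is a convex combination of product states. -/
def IsSepState (ρ : Matrix (Fin 2 × Fin 2) (Fin 2 × Fin 2) ℂ) : Prop :=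
  ∃ (N : ℕ) (p : Fin N → ℝ) (ρA ρB : Fin N → Matrix (Fin 2) (Fin 2) ℂ),
    (∀ n, 0 ≤ p n) ∧ (∑ n, p n = 1) ∧
    (∀ n, (ρA n).PosSemidef ∧ (ρA n).trace = 1) ∧
    (∀ n, (ρB n).PosSemidef ∧ (ρB n).trace = 1) ∧
    ρ = ∑ n, (p n : ℂ) • (ρA n ⊗ₖ ρB n)

/-!
For a qubit density matrix `M` the Bloch components `Tr(σ₁M) = M₀₀ - M₁₁` and
`Tr(σ₂M) = 2 Re M₀₁` satisfy `Tr(σ₁M)² + Tr(σ₂M)² ≤ 1`, because `det M ≥ 0`. On a product state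
`Tr(B (ρ_A ⊗ ρ_B))` factors as `√2 (a₁b₁ + a₂b₂)` in these components, so Cauchy–Schwarz bounds it
by `√2`; the bound is preserved by convex combinations, and `√2 ≤ 2`.
-/

theorem norm_mul_add_mul_le_one {R : Type*} [SeminormedRing R] {a b c d : R}
    (hac : ‖a‖ ^ 2 + ‖c‖ ^ 2 ≤ 1) (hbd : ‖b‖ ^ 2 + ‖d‖ ^ 2 ≤ 1) : ‖a * b + c * d‖ ≤ 1 := by
  calc ‖a * b + c * d‖ ≤ ‖a‖ * ‖b‖ + ‖c‖ * ‖d‖ :=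
        (norm_add_le _ _).trans (add_le_add (norm_mul_le a b) (norm_mul_le c d))
    _ ≤ 1 := by nlinarith [sq_nonneg (‖a‖ - ‖b‖), sq_nonneg (‖c‖ - ‖d‖)]

theorem trace_pauli_one_mul (M : Matrix (Fin 2) (Fin 2) ℂ) :
    (pauli 1 * M).trace = M 0 0 - M 1 1 := by
  simp [pauli, trace_fin_two, vecMul, dotProduct, sub_eq_add_neg]

theorem trace_pauli_two_mul (M : Matrix (Fin 2) (Fin 2) ℂ) :
    (pauli 2 * M).trace = M 1 0 + M 0 1 := by
  simp [pauli, trace_fin_two, vecMul, dotProduct]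

theorem Matrix.PosSemidef.norm_sq_trace_pauli_add_le_one {M : Matrix (Fin 2) (Fin 2) ℂ}
    (hM : M.PosSemidef) (htr : M.trace = 1) :
    ‖(pauli 1 * M).trace‖ ^ 2 + ‖(pauli 2 * M).trace‖ ^ 2 ≤ 1 := by
  obtain ⟨x, hx⟩ : ∃ x : ℝ, M 0 0 = x := ⟨_, (hM.1.coe_re_apply_self 0).symm⟩
  obtain ⟨y, hy⟩ : ∃ y : ℝ, M 1 1 = y := ⟨_, (hM.1.coe_re_apply_self 1).symm⟩
  have h10 : M 1 0 = (starRingEnd ℂ) (M 0 1) := (hM.1.apply 1 0).symm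
  have hxy : x + y = 1 := by
    rw [trace_fin_two, hx, hy] at htr; exact_mod_cast htr
  have hdet : Complex.normSq (M 0 1) ≤ x * y := by
    have := hM.det_nonneg
    rw [det_fin_two, hx, hy, h10, Complex.mul_conj] at this
    exact_mod_cast sub_nonneg.1 this
  have hre : (M 0 1).re ^ 2 ≤ Complex.normSq (M 0 1) := by
    rw [Complex.normSq_apply]; nlinarith [sq_nonneg (M 0 1).im]
  rw [trace_pauli_one_mul, trace_pauli_two_mul, hx, hy, h10, add_comm _ (M 0 1), Complex.add_conj,
    ← Complex.ofReal_sub, Complex.norm_real, Complex.norm_real, Real.norm_eq_abs,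
    Real.norm_eq_abs, sq_abs, sq_abs]
  -- `(x - y)² + (2 Re M₀₁)² ≤ (x - y)² + 4xy = (x + y)² = 1`
  nlinarith

theorem trace_bellOperator_mul_kronecker (A B : Matrix (Fin 2) (Fin 2) ℂ) :
    (bellOperator * (A ⊗ₖ B)).trace = Real.sqrt 2 *
      ((pauli 1 * A).trace * (pauli 1 * B).trace + (pauli 2 * A).trace * (pauli 2 * B).trace) := by
  simp only [bellOperator, smul_mul, add_mul, ← mul_kronecker_mul, trace_smul, trace_add,
    trace_kronecker, smul_eq_mul]

theorem norm_trace_bellOperator_mul_kronecker_le {A B : Matrix (Fin 2) (Fin 2) ℂ}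
    (hA : A.PosSemidef) (hAtr : A.trace = 1) (hB : B.PosSemidef) (hBtr : B.trace = 1) :
    ‖(bellOperator * (A ⊗ₖ B)).trace‖ ≤ Real.sqrt 2 := by
  rw [trace_bellOperator_mul_kronecker, norm_mul, Complex.norm_real, Real.norm_of_nonneg
    (Real.sqrt_nonneg 2)]
  exact mul_le_of_le_one_right (Real.sqrt_nonneg 2) <| norm_mul_add_mul_le_one
    (hA.norm_sq_trace_pauli_add_le_one hAtr) (hB.norm_sq_trace_pauli_add_le_one hBtr)

/-- Separable two-qubit states satisfy the CHSH bound `|Tr(Bρ)| ≤ 2`. -/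
theorem separable_satisfies_chsh (ρ : Matrix (Fin 2 × Fin 2) (Fin 2 × Fin 2) ℂ)
    (hρ : IsSepState ρ) : ‖(bellOperator * ρ).trace‖ ≤ 2 := by
  obtain ⟨N, p, ρA, ρB, hp, hpsum, hA, hB, rfl⟩ := hρ
  have htrace : (bellOperator * ∑ n, (p n : ℂ) • (ρA n ⊗ₖ ρB n)).trace =
      ∑ n, p n • (bellOperator * (ρA n ⊗ₖ ρB n)).trace := by
    simp only [Complex.coe_smul, Matrix.mul_sum, Matrix.mul_smul, trace_sum, trace_smul]
  have hmem : ∑ n, p n • (bellOperator * (ρA n ⊗ₖ ρB n)).trace ∈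
      Metric.closedBall (0 : ℂ) (Real.sqrt 2) :=
    (convex_closedBall 0 _).sum_mem (fun n _ => hp n) hpsum fun n _ =>
      mem_closedBall_zero_iff.2 <|
        norm_trace_bellOperator_mul_kronecker_le (hA n).1 (hA n).2 (hB n).1 (hB n).2
  calc ‖(bellOperator * ∑ n, (p n : ℂ) • (ρA n ⊗ₖ ρB n)).trace‖ ≤ Real.sqrt 2 := by
        rw [htrace]; exact mem_closedBall_zero_iff.1 hmem
    _ ≤ 2 := Real.sqrt_le_iff.2 ⟨by norm_num, by norm_num⟩
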